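/- Let Σ_B and Σ_F be complete fans (their supports are all of ℝ^k and ℝ^n respectively) and Φ piecewise linear on Σ_B. Then the twisted product Σ_B ⋉_Φ Σ_F is a complete fan in ℝ^k × ℝ^n. -/

import Mathlib

open scoped Pointwise

noncomputable section

/-- A convex polyhedral cone: the set of nonnegative linear combinations of finitely many
vectors, i.e. the span over the semiring of nonnegative reals of a finite set. -/
def IsPolyCone {E : Type*} [AddCommMonoid E] [Module ℝ E] (C : Set E) : Prop :=
  ∃ s : Finset E,
    C = (Submodule.span {c : ℝ // 0 ≤ c} (s : Set E) : Submodule {c : ℝ // 0 ≤ c} E)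

/-- Nonnegative span of a set. -/
def posSpan {E : Type*} [AddCommMonoid E] [Module ℝ E] (s : Set E) : Set E :=
  (Submodule.span {c : ℝ // 0 ≤ c} s : Submodule {c : ℝ // 0 ≤ c} E)

/-- The graph of a map `Φ` over a set `σ`. -/
def graphOver {k n : ℕ} (Φ : (Fin k → ℝ) → (Fin n → ℝ)) (σ : Set (Fin k → ℝ)) :
    Set ((Fin k → ℝ) × (Fin n → ℝ)) :=
  (fun x => (x, Φ x)) '' σ

/-- The twisted cone `σ̃ + τ`: the Minkowski sum of the graph of `Φ` over `σ` with
`τ` embedded as `{0} × τ`. -/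
def twistedCone {k n : ℕ} (Φ : (Fin k → ℝ) → (Fin n → ℝ)) (σ : Set (Fin k → ℝ))
    (τ : Set (Fin n → ℝ)) : Set ((Fin k → ℝ) × (Fin n → ℝ)) :=
  graphOver Φ σ + ({0} : Set (Fin k → ℝ)) ×ˢ τ

/-- A face of a convex cone `C`: the intersection of `C` with a supporting hyperplane,
together with `C` itself. -/
def IsFaceOf {E : Type*} [AddCommMonoid E] [Module ℝ E] (F C : Set E) : Prop :=
  F = C ∨ ∃ ℓ : E →ₗ[ℝ] ℝ, (∀ x ∈ C, ℓ x ≤ 0) ∧ F = {x ∈ C | ℓ x = 0}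

/-- A fan: a finite collection of strongly convex polyhedral cones, closed under taking
faces, and such that the intersection of any two of its cones is a face of each. -/
def IsFan {E : Type*} [AddCommGroup E] [Module ℝ E] (F : Set (Set E)) : Prop :=
  F.Finite ∧
  (∀ C ∈ F, IsPolyCone C ∧ C ∩ (-C) = {0}) ∧
  (∀ C ∈ F, ∀ G : Set E, IsFaceOf G C → G ∈ F) ∧
  (∀ C ∈ F, ∀ D ∈ F, IsFaceOf (C ∩ D) C ∧ IsFaceOf (C ∩ D) D)

/-- `Φ` is piecewise linear with respect to a fan `F`: it is continuous on the support
`|F|` and restricts to a linear map on each cone of `F`. -/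
def IsPLOn {k n : ℕ} (Φ : (Fin k → ℝ) → (Fin n → ℝ)) (F : Set (Set (Fin k → ℝ))) : Prop :=
  ContinuousOn Φ (⋃₀ F) ∧
  ∀ σ ∈ F, ∃ ℓ : (Fin k → ℝ) →ₗ[ℝ] (Fin n → ℝ), ∀ x ∈ σ, Φ x = ℓ x

/-- The twisted product of fans `Σ_B ⋉_Φ Σ_F = {σ̃ + τ : σ ∈ Σ_B, τ ∈ Σ_F}`. -/
def twistedFan {k n : ℕ} (Φ : (Fin k → ℝ) → (Fin n → ℝ)) (SB : Set (Set (Fin k → ℝ)))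
    (SF : Set (Set (Fin n → ℝ))) : Set (Set ((Fin k → ℝ) × (Fin n → ℝ))) :=
  {C | ∃ σ ∈ SB, ∃ τ ∈ SF, C = twistedCone Φ σ τ}


/-! Over a cone `σ` on which `Φ` agrees with a linear map `L`, the twisted cone `σ̃ + τ` is the
image of `σ × τ` under the shear `(x, y) ↦ (x, y + L x)`, a linear automorphism of
`ℝ^k × ℝ^n`. Products of cones and linear automorphisms preserve polyhedrality, salience and
faces, and every face of `σ × τ` is a product of faces, so each fan axiom for the twisted
product follows from the corresponding axioms for `Σ_B` and `Σ_F`. Completeness is immediate: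
`(x, y)` lies in `σ̃ + τ` for any `σ ∋ x` and `τ ∋ y - Φ x`. -/

section Salient

variable {E F : Type*} [AddGroup E] [AddGroup F]

theorem zero_mem_of_inter_neg_eq {C : Set E} (hC : C ∩ -C = {0}) : (0 : E) ∈ C :=
  (hC.symm.subset rfl).1

theorem prod_inter_neg_eq {σ : Set E} {τ : Set F} (hσ : σ ∩ -σ = {0}) (hτ : τ ∩ -τ = {0}) :
    σ ×ˢ τ ∩ -(σ ×ˢ τ) = {0} := by
  rw [Set.neg_prod, Set.prod_inter_prod, hσ, hτ, Set.singleton_prod_singleton, Prod.zero_eq_mk]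

end Salient

section Cones

variable {E F : Type*} [AddCommGroup E] [Module ℝ E] [AddCommGroup F] [Module ℝ F]

theorem IsPolyCone.image {C : Set E} (hC : IsPolyCone C) (f : E →ₗ[ℝ] F) :
    IsPolyCone (f '' C) := by
  classical
  obtain ⟨s, rfl⟩ := hC
  refine ⟨s.image f, ?_⟩
  rw [Finset.coe_image]
  exact congrArg SetLike.coe (Submodule.map_span (f.restrictScalars {c : ℝ // 0 ≤ c}) s)

theorem IsPolyCone.prod {σ : Set E} {τ : Set F} (hσ : IsPolyCone σ) (hτ : IsPolyCone τ) :
    IsPolyCone (σ ×ˢ τ) := by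
  classical
  obtain ⟨s, rfl⟩ := hσ
  obtain ⟨t, rfl⟩ := hτ
  refine ⟨s.image (LinearMap.inl {c : ℝ // 0 ≤ c} E F) ∪
    t.image (LinearMap.inr {c : ℝ // 0 ≤ c} E F), ?_⟩
  rw [Finset.coe_union, Finset.coe_image, Finset.coe_image, LinearMap.span_inl_union_inr,
    Submodule.prod_coe]

theorem LinearEquiv.image_inter_neg_eq (e : E ≃ₗ[ℝ] F) {C : Set E} (hC : C ∩ -C = {0}) :
    e '' C ∩ -(e '' C) = {0} := by
  have : -(e '' C) = e '' (-C) := by ext; simp [LinearEquiv.image_eq_preimage_symm]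
  rw [this, ← Set.image_inter e.injective, hC, Set.image_singleton, map_zero]

theorem IsFaceOf.subset {G C : Set E} (h : IsFaceOf G C) : G ⊆ C := by
  rcases h with rfl | ⟨ℓ, -, rfl⟩
  exacts [le_rfl, Set.sep_subset _ _]

theorem isFaceOf_iff_exists {G C : Set E} :
    IsFaceOf G C ↔ ∃ ℓ : E →ₗ[ℝ] ℝ, (∀ x ∈ C, ℓ x ≤ 0) ∧ G = {x ∈ C | ℓ x = 0} := by
  refine ⟨?_, Or.inr⟩
  rintro (rfl | h)
  exacts [⟨0, by simp, by simp⟩, h]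

theorem IsFaceOf.image {G C : Set E} (h : IsFaceOf G C) (e : E ≃ₗ[ℝ] F) :
    IsFaceOf (e '' G) (e '' C) := by
  obtain ⟨ℓ, hℓ, rfl⟩ := isFaceOf_iff_exists.1 h
  refine Or.inr ⟨ℓ ∘ₗ e.symm.toLinearMap, ?_, ?_⟩
  · rintro _ ⟨x, hx, rfl⟩
    simpa using hℓ x hx
  · ext y
    simp [LinearEquiv.image_eq_preimage_symm]

theorem sep_prod_eq_prod_sep {σ : Set E} {τ : Set F} {m : E →ₗ[ℝ] ℝ} {n : F →ₗ[ℝ] ℝ}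
    (hm : ∀ x ∈ σ, m x ≤ 0) (hn : ∀ y ∈ τ, n y ≤ 0) :
    {z ∈ σ ×ˢ τ | m z.1 + n z.2 = 0} = {x ∈ σ | m x = 0} ×ˢ {y ∈ τ | n y = 0} := by
  ext ⟨x, y⟩
  simp only [Set.mem_sep_iff, Set.mem_prod]
  constructor
  · rintro ⟨⟨hx, hy⟩, h⟩
    have hmx := hm x hx
    have hny := hn y hy
    exact ⟨⟨hx, by linarith⟩, hy, by linarith⟩
  · rintro ⟨⟨hx, hmx⟩, hy, hny⟩
    exact ⟨⟨hx, hy⟩, by rw [hmx, hny, add_zero]⟩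

theorem IsFaceOf.prod {G C : Set E} {G' C' : Set F} (h : IsFaceOf G C) (h' : IsFaceOf G' C') :
    IsFaceOf (G ×ˢ G') (C ×ˢ C') := by
  obtain ⟨m, hm, rfl⟩ := isFaceOf_iff_exists.1 h
  obtain ⟨n, hn, rfl⟩ := isFaceOf_iff_exists.1 h'
  refine Or.inr ⟨m ∘ₗ LinearMap.fst ℝ E F + n ∘ₗ LinearMap.snd ℝ E F, ?_, ?_⟩
  · rintro ⟨x, y⟩ ⟨hx, hy⟩
    exact add_nonpos (hm x hx) (hn y hy)
  · exact (sep_prod_eq_prod_sep hm hn).symm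

theorem IsFaceOf.exists_eq_prod {G : Set (E × F)} {C : Set E} {C' : Set F}
    (h : IsFaceOf G (C ×ˢ C')) (hC : (0 : E) ∈ C) (hC' : (0 : F) ∈ C') :
    ∃ D D', IsFaceOf D C ∧ IsFaceOf D' C' ∧ G = D ×ˢ D' := by
  obtain ⟨ℓ, hℓ, rfl⟩ := isFaceOf_iff_exists.1 h
  have hm : ∀ x ∈ C, ℓ (x, 0) ≤ 0 := fun x hx => hℓ _ ⟨hx, hC'⟩
  have hn : ∀ y ∈ C', ℓ (0, y) ≤ 0 := fun y hy => hℓ _ ⟨hC, hy⟩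
  refine ⟨_, _, Or.inr ⟨ℓ ∘ₗ LinearMap.inl ℝ E F, hm, rfl⟩,
    Or.inr ⟨ℓ ∘ₗ LinearMap.inr ℝ E F, hn, rfl⟩, ?_⟩
  rw [← sep_prod_eq_prod_sep (m := ℓ ∘ₗ LinearMap.inl ℝ E F) hm hn]
  simp only [LinearMap.comp_apply, LinearMap.inl_apply, LinearMap.inr_apply, ← map_add,
    Prod.mk_add_mk, add_zero, zero_add]

end Cones

section Shear

variable {E F : Type*} [AddCommGroup E] [Module ℝ E] [AddCommGroup F] [Module ℝ F]

def shear (L : E →ₗ[ℝ] F) : (E × F) ≃ₗ[ℝ] E × F :=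
  LinearEquiv.skewProd (LinearEquiv.refl ℝ E) (LinearEquiv.refl ℝ F) L

@[simp]
theorem shear_symm_apply (L : E →ₗ[ℝ] F) (z : E × F) : (shear L).symm z = (z.1, z.2 - L z.1) :=
  rfl

end Shear

section Twisted

variable {k n : ℕ} {Φ : (Fin k → ℝ) → (Fin n → ℝ)}

theorem mem_twistedCone {σ : Set (Fin k → ℝ)} {τ : Set (Fin n → ℝ)}
    {z : (Fin k → ℝ) × (Fin n → ℝ)} :
    z ∈ twistedCone Φ σ τ ↔ z.1 ∈ σ ∧ z.2 - Φ z.1 ∈ τ := by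
  constructor
  · rintro ⟨_, ⟨x, hx, rfl⟩, ⟨y₀, y⟩, ⟨hy₀, hy⟩, rfl⟩
    obtain rfl : y₀ = 0 := hy₀
    simpa using And.intro hx hy
  · rintro ⟨hx, hy⟩
    exact ⟨(z.1, Φ z.1), ⟨z.1, hx, rfl⟩, (0, z.2 - Φ z.1), ⟨rfl, hy⟩, by simp⟩

theorem twistedCone_inter (σ σ' : Set (Fin k → ℝ)) (τ τ' : Set (Fin n → ℝ)) :
    twistedCone Φ σ τ ∩ twistedCone Φ σ' τ' = twistedCone Φ (σ ∩ σ') (τ ∩ τ') := by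
  ext z
  simp only [Set.mem_inter_iff, mem_twistedCone]
  tauto

theorem twistedCone_eq_shear_image {σ : Set (Fin k → ℝ)} (τ : Set (Fin n → ℝ))
    {L : (Fin k → ℝ) →ₗ[ℝ] (Fin n → ℝ)} (hL : ∀ x ∈ σ, Φ x = L x) :
    twistedCone Φ σ τ = shear L '' σ ×ˢ τ := by
  ext z
  rw [mem_twistedCone, LinearEquiv.image_eq_preimage_symm, Set.mem_preimage, shear_symm_apply,
    Set.mem_prod]
  exact and_congr_right fun hz => by rw [hL z.1 hz]

theorem isFaceOf_twistedCone {σ D : Set (Fin k → ℝ)} {τ D' : Set (Fin n → ℝ)}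
    {L : (Fin k → ℝ) →ₗ[ℝ] (Fin n → ℝ)} (hL : ∀ x ∈ σ, Φ x = L x)
    (hD : IsFaceOf D σ) (hD' : IsFaceOf D' τ) :
    IsFaceOf (twistedCone Φ D D') (twistedCone Φ σ τ) := by
  rw [twistedCone_eq_shear_image τ hL,
    twistedCone_eq_shear_image D' fun x hx => hL x (hD.subset hx)]
  exact (hD.prod hD').image _

theorem exists_eq_twistedCone_of_isFaceOf {G : Set ((Fin k → ℝ) × (Fin n → ℝ))}
    {σ : Set (Fin k → ℝ)} {τ : Set (Fin n → ℝ)} {L : (Fin k → ℝ) →ₗ[ℝ] (Fin n → ℝ)}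
    (hL : ∀ x ∈ σ, Φ x = L x) (hσ : (0 : Fin k → ℝ) ∈ σ) (hτ : (0 : Fin n → ℝ) ∈ τ)
    (hG : IsFaceOf G (twistedCone Φ σ τ)) :
    ∃ D D', IsFaceOf D σ ∧ IsFaceOf D' τ ∧ G = twistedCone Φ D D' := by
  rw [twistedCone_eq_shear_image τ hL] at hG
  have hG' := hG.image (shear L).symm
  simp only [Set.image_image, LinearEquiv.symm_apply_apply, Set.image_id'] at hG'
  obtain ⟨D, D', hD, hD', hGD⟩ := hG'.exists_eq_prod hσ hτ
  refine ⟨D, D', hD, hD', ?_⟩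
  rw [twistedCone_eq_shear_image D' fun x hx => hL x (hD.subset hx), ← hGD,
    Set.image_image]
  simp only [LinearEquiv.apply_symm_apply, Set.image_id']

theorem twistedFan_finite {SB : Set (Set (Fin k → ℝ))} {SF : Set (Set (Fin n → ℝ))}
    (hB : SB.Finite) (hF : SF.Finite) : (twistedFan Φ SB SF).Finite :=
  (hB.image2 _ hF).subset fun _ ⟨σ, hσ, τ, hτ, hC⟩ => ⟨σ, hσ, τ, hτ, hC.symm⟩

theorem sUnion_twistedFan {SB : Set (Set (Fin k → ℝ))} {SF : Set (Set (Fin n → ℝ))}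
    (hB : ⋃₀ SB = Set.univ) (hF : ⋃₀ SF = Set.univ) : ⋃₀ twistedFan Φ SB SF = Set.univ := by
  refine Set.eq_univ_of_forall fun z => ?_
  obtain ⟨σ, hσ, hzσ⟩ := Set.mem_sUnion.1 (hB ▸ Set.mem_univ z.1)
  obtain ⟨τ, hτ, hzτ⟩ := Set.mem_sUnion.1 (hF ▸ Set.mem_univ (z.2 - Φ z.1))
  exact ⟨_, ⟨σ, hσ, τ, hτ, rfl⟩, mem_twistedCone.2 ⟨hzσ, hzτ⟩⟩

theorem IsFan.twistedFan {SB : Set (Set (Fin k → ℝ))} {SF : Set (Set (Fin n → ℝ))}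
    (hB : IsFan SB) (hF : IsFan SF)
    (hΦ : ∀ σ ∈ SB, ∃ L : (Fin k → ℝ) →ₗ[ℝ] (Fin n → ℝ), ∀ x ∈ σ, Φ x = L x) :
    IsFan (twistedFan Φ SB SF) := by
  obtain ⟨hBfin, hBcone, hBface, hBinter⟩ := hB
  obtain ⟨hFfin, hFcone, hFface, hFinter⟩ := hF
  refine ⟨twistedFan_finite hBfin hFfin, ?_, ?_, ?_⟩
  · rintro _ ⟨σ, hσ, τ, hτ, rfl⟩
    obtain ⟨L, hL⟩ := hΦ σ hσ
    rw [twistedCone_eq_shear_image τ hL]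
    exact ⟨((hBcone σ hσ).1.prod (hFcone τ hτ).1).image _,
      (shear L).image_inter_neg_eq (prod_inter_neg_eq (hBcone σ hσ).2 (hFcone τ hτ).2)⟩
  · rintro _ ⟨σ, hσ, τ, hτ, rfl⟩ G hG
    obtain ⟨L, hL⟩ := hΦ σ hσ
    obtain ⟨D, D', hD, hD', rfl⟩ := exists_eq_twistedCone_of_isFaceOf hL
      (zero_mem_of_inter_neg_eq (hBcone σ hσ).2) (zero_mem_of_inter_neg_eq (hFcone τ hτ).2) hG
    exact ⟨D, hBface σ hσ D hD, D', hFface τ hτ D' hD', rfl⟩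
  · rintro _ ⟨σ, hσ, τ, hτ, rfl⟩ _ ⟨σ', hσ', τ', hτ', rfl⟩
    obtain ⟨L, hL⟩ := hΦ σ hσ
    obtain ⟨L', hL'⟩ := hΦ σ' hσ'
    rw [twistedCone_inter]
    exact ⟨isFaceOf_twistedCone hL (hBinter σ hσ σ' hσ').1 (hFinter τ hτ τ' hτ').1,
      isFaceOf_twistedCone hL' (hBinter σ hσ σ' hσ').2 (hFinter τ hτ τ' hτ').2⟩

end Twisted

/-- the twisted product of complete fans is a complete fan. -/
theorem stmt12 (k n : ℕ) (SB : Set (Set (Fin k → ℝ))) (hB : IsFan SB)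
    (SF : Set (Set (Fin n → ℝ))) (hF : IsFan SF)
    (Φ : (Fin k → ℝ) → (Fin n → ℝ)) (hΦ : IsPLOn Φ SB)
    (hBc : ⋃₀ SB = Set.univ) (hFc : ⋃₀ SF = Set.univ) :
    IsFan (twistedFan Φ SB SF) ∧ ⋃₀ twistedFan Φ SB SF = Set.univ :=
  ⟨hB.twistedFan hF hΦ.2, sUnion_twistedFan hBc hFc⟩
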